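/- (Expansion Theorem) Let n ≥ 1, let E ⊂ ℝⁿ be a non-empty set and let λ > 0. Then the upper compensated convex transform of the characteristic function χ_E satisfies: C^u_λ(χ_E)(x) = 1 if x ∈ Ē (the closure of E); C^u_λ(χ_E)(x) = 0 if dist(x, Ē) ≥ 1/√λ; and 0 < C^u_λ(χ_E)(x) < 1 if x ∉ Ē and dist(x, E) < 1/√λ. -/

import Mathlib

/-- Convex envelope: pointwise sup of affine minorants. -/
noncomputable def convEnv {n : ℕ} (g : EuclideanSpace ℝ (Fin n) → ℝ)
    (x : EuclideanSpace ℝ (Fin n)) : ℝ :=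
  sSup {a : ℝ | ∃ ℓ : EuclideanSpace ℝ (Fin n) →ᵃ[ℝ] ℝ, (∀ y, ℓ y ≤ g y) ∧ a = ℓ x}

/-- Upper compensated convex transform. -/
noncomputable def upperT {n : ℕ} (lam : ℝ) (f : EuclideanSpace ℝ (Fin n) → ℝ)
    (x : EuclideanSpace ℝ (Fin n)) : ℝ :=
  lam * ‖x‖ ^ 2 - convEnv (fun y => lam * ‖y‖ ^ 2 - f y) x

/-- Characteristic function of a set: `χ_E(x) = 1` if `x ∈ E`, `0` otherwise. -/
noncomputable def chi {n : ℕ} (E : Set (EuclideanSpace ℝ (Fin n)))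
    (x : EuclideanSpace ℝ (Fin n)) : ℝ :=
  E.indicator (fun _ => (1 : ℝ)) x

/-!
For an affine minorant `ℓ` of `λ‖·‖² - χ_E`, the gap `q = λ‖·‖² - ℓ` is nonnegative and at least
`1` on `E`. Along any line `x + t v` it is a nonnegative quadratic in `t` with leading coefficient
`λ‖v‖²`, so its discriminant bound makes `√q` a `√λ`-Lipschitz function; hence
`q x ≥ (1 - √λ d)₊²` with `d = dist(x, E)`. Conversely the tangent planes of `λ‖·‖²` at `x`, lowered
by `(1 - λ d²)₊`, are minorants. Thus `(1 - √λ d)₊² ≤ C^u_λ(χ_E)(x) ≤ (1 - λ d²)₊`, which gives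
all three cases.
-/

open Metric

lemma sqrt_add_add_le_of_quadratic_nonneg {A B C : ℝ} (hA : 0 ≤ A)
    (h : ∀ t : ℝ, 0 ≤ A * (t * t) + B * t + C) :
    √(A + B + C) ≤ √A + √C := by
  have hC : 0 ≤ C := by simpa using h 0
  have hB : B ≤ 2 * √A * √C := by
    refine le_of_abs_le (abs_le_of_sq_le_sq ?_ (by positivity))
    have := discrim_le_zero h
    rw [discrim] at this
    rw [mul_pow, mul_pow, Real.sq_sqrt hA, Real.sq_sqrt hC]
    linarith
  rw [Real.sqrt_le_left (by positivity), add_sq, Real.sq_sqrt hA, Real.sq_sqrt hC]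
  linarith

section Paraboloid

variable {V : Type*} [NormedAddCommGroup V] [InnerProductSpace ℝ V]

/-- The tangent plane of `λ‖·‖²` at `c`, lowered by `s`. -/
noncomputable def paraboloidTangent (lam : ℝ) (c : V) (s : ℝ) : V →ᵃ[ℝ] ℝ where
  toFun y := 2 * lam * inner ℝ c y - lam * ‖c‖ ^ 2 - s
  linear := (2 * lam) • (innerSL ℝ c).toLinearMap
  map_vadd' p v := by
    simp only [vadd_eq_add, inner_add_right, LinearMap.smul_apply,
      ContinuousLinearMap.coe_coe, innerSL_apply_apply, smul_eq_mul]
    ring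

lemma paraboloidTangent_apply (lam : ℝ) (c : V) (s : ℝ) (y : V) :
    paraboloidTangent lam c s y = lam * ‖y‖ ^ 2 - lam * ‖y - c‖ ^ 2 - s := by
  change 2 * lam * inner ℝ c y - lam * ‖c‖ ^ 2 - s = _
  rw [norm_sub_sq_real, real_inner_comm]
  ring

lemma paraboloid_sub_affine_along_line (lam : ℝ) (ℓ : V →ᵃ[ℝ] ℝ) (x v : V) (t : ℝ) :
    lam * ‖x + t • v‖ ^ 2 - ℓ (x + t • v) =
      lam * ‖v‖ ^ 2 * (t * t) + (2 * lam * inner ℝ x v - ℓ.linear v) * t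
        + (lam * ‖x‖ ^ 2 - ℓ x) := by
  have hℓ : ℓ (x + t • v) = t * ℓ.linear v + ℓ x := by
    rw [add_comm, ← vadd_eq_add, ℓ.map_vadd, map_smul, smul_eq_mul, vadd_eq_add]
  rw [hℓ, norm_add_sq_real, real_inner_smul_right, norm_smul, mul_pow, Real.norm_eq_abs, sq_abs]
  ring

lemma sqrt_paraboloid_sub_affine_le {lam : ℝ} (hlam : 0 ≤ lam) (ℓ : V →ᵃ[ℝ] ℝ)
    (hℓ : ∀ z, ℓ z ≤ lam * ‖z‖ ^ 2) (x y : V) :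
    √(lam * ‖y‖ ^ 2 - ℓ y) ≤ √(lam * ‖x‖ ^ 2 - ℓ x) + √lam * dist x y := by
  have hline := paraboloid_sub_affine_along_line lam ℓ x (y - x)
  have hy : lam * ‖y‖ ^ 2 - ℓ y = lam * ‖y - x‖ ^ 2 + (2 * lam * inner ℝ x (y - x) -
      ℓ.linear (y - x)) + (lam * ‖x‖ ^ 2 - ℓ x) := by
    simpa using hline 1
  have key := sqrt_add_add_le_of_quadratic_nonneg (by positivity) fun t =>
    hline t ▸ sub_nonneg.2 (hℓ _)
  rwa [← hy, Real.sqrt_mul hlam, Real.sqrt_sq (norm_nonneg _), ← dist_eq_norm, dist_comm,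
    add_comm (√lam * _)] at key

end Paraboloid

section ConvexEnvelope

variable {n : ℕ} {g : EuclideanSpace ℝ (Fin n) → ℝ}

lemma le_convEnv (ℓ : EuclideanSpace ℝ (Fin n) →ᵃ[ℝ] ℝ) (hℓ : ∀ y, ℓ y ≤ g y)
    (x : EuclideanSpace ℝ (Fin n)) : ℓ x ≤ convEnv g x :=
  le_csSup ⟨g x, by rintro _ ⟨ℓ', hℓ', rfl⟩; exact hℓ' x⟩ ⟨ℓ, hℓ, rfl⟩

lemma convEnv_le {x : EuclideanSpace ℝ (Fin n)} {b : ℝ}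
    (hne : ∃ ℓ : EuclideanSpace ℝ (Fin n) →ᵃ[ℝ] ℝ, ∀ y, ℓ y ≤ g y)
    (h : ∀ ℓ : EuclideanSpace ℝ (Fin n) →ᵃ[ℝ] ℝ, (∀ y, ℓ y ≤ g y) → ℓ x ≤ b) :
    convEnv g x ≤ b :=
  csSup_le (let ⟨ℓ, hℓ⟩ := hne; ⟨ℓ x, ℓ, hℓ, rfl⟩) (by rintro _ ⟨ℓ, hℓ, rfl⟩; exact h ℓ hℓ)

end ConvexEnvelope

section Characteristic

variable {n : ℕ} {E : Set (EuclideanSpace ℝ (Fin n))} {lam : ℝ}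

lemma chi_nonneg (E : Set (EuclideanSpace ℝ (Fin n))) (y : EuclideanSpace ℝ (Fin n)) :
    0 ≤ chi E y :=
  Set.indicator_nonneg (fun _ _ => zero_le_one) y

lemma chi_of_mem {y : EuclideanSpace ℝ (Fin n)} (hy : y ∈ E) : chi E y = 1 :=
  Set.indicator_of_mem hy _

lemma paraboloidTangent_le_sub_chi (hlam : 0 ≤ lam) {c : EuclideanSpace ℝ (Fin n)} {s : ℝ}
    (hs : 0 ≤ s) (hE : ∀ y ∈ E, 1 ≤ lam * ‖y - c‖ ^ 2 + s) (y : EuclideanSpace ℝ (Fin n)) :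
    paraboloidTangent lam c s y ≤ lam * ‖y‖ ^ 2 - chi E y := by
  have : chi E y ≤ lam * ‖y - c‖ ^ 2 + s :=
    Set.indicator_le' hE (fun _ _ => by positivity) y
  rw [paraboloidTangent_apply]
  linarith

lemma upperT_chi_le (hlam : 0 ≤ lam) (E : Set (EuclideanSpace ℝ (Fin n)))
    (x : EuclideanSpace ℝ (Fin n)) :
    upperT lam (chi E) x ≤ max (1 - lam * infDist x E ^ 2) 0 := by
  have hfar : ∀ y ∈ E, 1 ≤ lam * ‖y - x‖ ^ 2 + max (1 - lam * infDist x E ^ 2) 0 := by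
    intro y hy
    have hd : infDist x E ≤ ‖y - x‖ := by
      rw [← dist_eq_norm, dist_comm]
      exact infDist_le_dist_of_mem hy
    have := mul_le_mul_of_nonneg_left (pow_le_pow_left₀ infDist_nonneg hd 2) hlam
    linarith [le_max_left (1 - lam * infDist x E ^ 2) 0]
  have := le_convEnv _ (paraboloidTangent_le_sub_chi hlam (le_max_right _ _) hfar) x
  rw [paraboloidTangent_apply, sub_self, norm_zero] at this
  unfold upperT
  linarith

lemma le_upperT_chi (hlam : 0 < lam) (hE : E.Nonempty) (x : EuclideanSpace ℝ (Fin n)) :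
    max (1 - √lam * infDist x E) 0 ^ 2 ≤ upperT lam (chi E) x := by
  have hne : ∃ ℓ : EuclideanSpace ℝ (Fin n) →ᵃ[ℝ] ℝ, ∀ y, ℓ y ≤ lam * ‖y‖ ^ 2 - chi E y :=
    ⟨paraboloidTangent lam x 1, paraboloidTangent_le_sub_chi hlam.le zero_le_one fun _ _ =>
      le_add_of_nonneg_left (by positivity)⟩
  suffices h : convEnv (fun y => lam * ‖y‖ ^ 2 - chi E y) x ≤
      lam * ‖x‖ ^ 2 - max (1 - √lam * infDist x E) 0 ^ 2 by
    unfold upperT; linarith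
  refine convEnv_le hne fun ℓ hℓ => ?_
  have hℓ' : ∀ z, ℓ z ≤ lam * ‖z‖ ^ 2 := fun z => by linarith [hℓ z, chi_nonneg E z]
  have hgap : ∀ y ∈ E, 1 ≤ √(lam * ‖x‖ ^ 2 - ℓ x) + √lam * dist x y := fun y hy =>
    calc 1 ≤ √(lam * ‖y‖ ^ 2 - ℓ y) := by
          rw [Real.one_le_sqrt]; linarith [hℓ y, chi_of_mem hy]
      _ ≤ _ := sqrt_paraboloid_sub_affine_le hlam.le ℓ hℓ' x y
  have hd : (1 - √(lam * ‖x‖ ^ 2 - ℓ x)) / √lam ≤ infDist x E := by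
    refine (le_infDist hE).2 fun y hy => ?_
    rw [div_le_iff₀ (Real.sqrt_pos.2 hlam)]
    linarith [hgap y hy]
  rw [div_le_iff₀ (Real.sqrt_pos.2 hlam)] at hd
  have hmax : max (1 - √lam * infDist x E) 0 ≤ √(lam * ‖x‖ ^ 2 - ℓ x) :=
    max_le (by linarith) (Real.sqrt_nonneg _)
  have := pow_le_pow_left₀ (le_max_right _ _) hmax 2
  rw [Real.sq_sqrt (by linarith [hℓ' x])] at this
  linarith

end Characteristic

theorem upperT_chi_expansion_general (n : ℕ)
    (E : Set (EuclideanSpace ℝ (Fin n))) (hE : E.Nonempty)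
    (lam : ℝ) (hlam : 0 < lam) (x : EuclideanSpace ℝ (Fin n)) :
    (x ∈ closure E → upperT lam (chi E) x = 1) ∧
    (1 / Real.sqrt lam ≤ Metric.infDist x (closure E) → upperT lam (chi E) x = 0) ∧
    (x ∉ closure E → Metric.infDist x E < 1 / Real.sqrt lam →
      0 < upperT lam (chi E) x ∧ upperT lam (chi E) x < 1) := by
  have hlow := le_upperT_chi hlam hE x
  have hup := upperT_chi_le hlam.le E x
  have hsqrt : 0 < √lam := Real.sqrt_pos.2 hlam
  have hlam_sq : lam * infDist x E ^ 2 = (√lam * infDist x E) ^ 2 := by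
    rw [mul_pow, Real.sq_sqrt hlam.le]
  rw [hlam_sq] at hup
  refine ⟨fun hx => ?_, fun hx => ?_, fun hx hd => ?_⟩
  · rw [infDist_zero_of_mem_closure hx, mul_zero] at hlow hup
    norm_num at hlow hup
    exact le_antisymm hup hlow
  · rw [infDist_closure, div_le_iff₀ hsqrt, mul_comm] at hx
    rw [max_eq_right (by nlinarith)] at hup
    linarith [sq_nonneg (max (1 - √lam * infDist x E) 0)]
  · have hd0 : 0 < √lam * infDist x E :=
      mul_pos hsqrt ((infDist_pos_iff_notMem_closure hE).1 hx)
    rw [lt_div_iff₀ hsqrt, mul_comm] at hd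
    rw [max_eq_left (by linarith)] at hlow
    rw [max_eq_left (by nlinarith)] at hup
    constructor <;> nlinarith

/-- Expansion theorem for the upper transform of a characteristic function. -/
theorem upperT_chi_expansion (n : ℕ) (hn : 1 ≤ n)
    (E : Set (EuclideanSpace ℝ (Fin n))) (hE : E.Nonempty)
    (lam : ℝ) (hlam : 0 < lam) (x : EuclideanSpace ℝ (Fin n)) :
    (x ∈ closure E → upperT lam (chi E) x = 1) ∧
    (1 / Real.sqrt lam ≤ Metric.infDist x (closure E) → upperT lam (chi E) x = 0) ∧
    (x ∉ closure E → Metric.infDist x E < 1 / Real.sqrt lam →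
      0 < upperT lam (chi E) x ∧ upperT lam (chi E) x < 1) :=
  upperT_chi_expansion_general n E hE lam hlam x
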